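/- The d-dimensional grid graph P_{n_1} □ P_{n_2} □ ... □ P_{n_d} with every n_i ≥ 3 has distance-2 chromatic number exactly 2d + 1; i.e., the minimum number of colours in a proper colouring where any two vertices at distance ≤ 2 get distinct colours is 2d + 1. -/

import Mathlib

/-- The cartesian (box) product of a finite family of graphs. -/
def BoxProd {d : ℕ} {V : Fin d → Type*} (G : ∀ i, SimpleGraph (V i)) :
    SimpleGraph (∀ i, V i) where
  Adj v w := ∃ i, (G i).Adj (v i) (w i) ∧ ∀ j, j ≠ i → v j = w j
  symm := ⟨fun _ _ ⟨i, h, hj⟩ => ⟨i, h.symm, fun j hji => (hj j hji).symm⟩⟩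
  loopless := ⟨fun _ ⟨i, h, _⟩ => (G i).irrefl h⟩

/-- The `d`-dimensional grid graph `P_{n 0} □ ⋯ □ P_{n (d-1)}`. -/
def Grid {d : ℕ} (n : Fin d → ℕ) : SimpleGraph (∀ i, Fin (n i)) :=
  BoxProd fun i => SimpleGraph.pathGraph (n i)

/-- The distance-2 chromatic number of a graph: the minimum number of colours in a
proper colouring where vertices at distance at most two get distinct colours. -/
noncomputable def dist2ChromaticNumber {V : Type*} (G : SimpleGraph V) : ℕ :=
  sInf {k | ∃ c : V → ℕ,
    (∀ u v, G.Adj u v → c u ≠ c v) ∧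
    (∀ u v w, G.Adj u v → G.Adj v w → u ≠ w → c u ≠ c w) ∧
    (Set.range c).ncard ≤ k}

/-!
A distance-2 colouring is exactly a colouring that is injective on every closed neighbourhood, so
an interior vertex of the grid, having `2d` neighbours, forces `2d + 1` colours. Conversely, give
the vertex `v` the weight `∑ i, (i + 1) * v i`. A step in direction `i` changes the weight by
`±(i + 1)`, so the weights on a closed neighbourhood are pairwise distinct and lie within `d` of
each other. Reducing them modulo `2d + 1` therefore keeps them distinct.
-/

namespace SimpleGraph

variable {V : Type*} (G : SimpleGraph V)

def IsDist2Coloring (c : V → ℕ) : Prop :=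
  ∀ v, Set.InjOn c (insert v (G.neighborSet v))

variable {G}

theorem isDist2Coloring_iff {c : V → ℕ} :
    G.IsDist2Coloring c ↔ (∀ u v, G.Adj u v → c u ≠ c v) ∧
      (∀ u v w, G.Adj u v → G.Adj v w → u ≠ w → c u ≠ c w) := by
  constructor
  · intro hc
    refine ⟨fun u v huv hcol => G.ne_of_adj huv ?_, fun u v w huv hvw huw hcol => huw ?_⟩
    · exact hc u (Set.mem_insert u _) (Set.mem_insert_of_mem u huv) hcol
    · exact hc v (Set.mem_insert_of_mem v huv.symm) (Set.mem_insert_of_mem v hvw) hcol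
  · rintro ⟨hadj, hdist2⟩ v u (rfl | hu) w (rfl | hw) hcol
    · rfl
    · exact absurd hcol (hadj u w hw)
    · exact absurd hcol.symm (hadj w u hu)
    · by_contra huw
      exact hdist2 u v w hu.symm hw huw hcol

theorem dist2ChromaticNumber_le {c : V → ℕ} (hc : G.IsDist2Coloring c) :
    dist2ChromaticNumber G ≤ (Set.range c).ncard := by
  obtain ⟨hadj, hdist2⟩ := isDist2Coloring_iff.mp hc
  exact Nat.sInf_le ⟨c, hadj, hdist2, le_rfl⟩

theorem ncard_neighborSet_lt_dist2ChromaticNumber [Finite V] (v : V) :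
    (G.neighborSet v).ncard < dist2ChromaticNumber G := by
  rw [dist2ChromaticNumber]
  refine Nat.lt_of_succ_le (le_csInf ?_ ?_)
  · have hinj : Function.Injective fun u => (Finite.equivFin V u : ℕ) :=
      Fin.val_injective.comp (Finite.equivFin V).injective
    obtain ⟨hadj, hdist2⟩ :=
      isDist2Coloring_iff.mp fun v => hinj.injOn (s := insert v (G.neighborSet v))
    exact ⟨_, _, hadj, hdist2, le_rfl⟩
  · rintro k ⟨c, hadj, hdist2, hk⟩
    calc (G.neighborSet v).ncard + 1 = (insert v (G.neighborSet v)).ncard :=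
          (Set.ncard_insert_of_notMem (G.notMem_neighborSet_self (a := v))).symm
      _ = (c '' insert v (G.neighborSet v)).ncard :=
          ((isDist2Coloring_iff.mpr ⟨hadj, hdist2⟩ v).ncard_image).symm
      _ ≤ (Set.range c).ncard := Set.ncard_le_ncard (Set.image_subset_range _ _)
      _ ≤ k := hk

end SimpleGraph

section Grid

variable {d : ℕ} {n : Fin d → ℕ}

theorem grid_adj_iff {u v : ∀ i, Fin (n i)} :
    (Grid n).Adj u v ↔
      ∃ i, ((u i : ℤ) - v i = 1 ∨ (u i : ℤ) - v i = -1) ∧ ∀ j ≠ i, u j = v j := by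
  refine exists_congr fun i => and_congr_left fun _ => ?_
  rw [SimpleGraph.pathGraph_adj]
  omega

theorem grid_update_adj (x : ∀ i, Fin (n i)) (i : Fin d) {a : Fin (n i)}
    (ha : (SimpleGraph.pathGraph (n i)).Adj a (x i)) : (Grid n).Adj (Function.update x i a) x :=
  ⟨i, by rwa [Function.update_self], fun _ hj => Function.update_of_ne hj _ _⟩

def gridWeight (v : ∀ i, Fin (n i)) : ℤ :=
  ∑ i : Fin d, ((i : ℕ) + 1 : ℤ) * (v i : ℤ)

theorem gridWeight_sub_gridWeight {u v : ∀ i, Fin (n i)} {i : Fin d} (h : ∀ j ≠ i, u j = v j) :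
    gridWeight u - gridWeight v = ((i : ℕ) + 1 : ℤ) * ((u i : ℤ) - v i) := by
  rw [gridWeight, gridWeight, ← Finset.sum_sub_distrib,
    Finset.sum_eq_single_of_mem i (Finset.mem_univ i) fun j _ hj => by rw [h j hj, sub_self]]
  ring

theorem gridWeight_sub_gridWeight_of_adj {u v : ∀ i, Fin (n i)} (h : (Grid n).Adj u v) :
    ∃ i : Fin d, gridWeight u - gridWeight v = ((i : ℕ) + 1 : ℤ) ∨
      gridWeight u - gridWeight v = -((i : ℕ) + 1 : ℤ) := by
  obtain ⟨i, hi | hi, hrest⟩ := grid_adj_iff.mp h <;>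
    exact ⟨i, by simp [gridWeight_sub_gridWeight hrest, hi]⟩

theorem gridWeight_ne_of_adj {u v : ∀ i, Fin (n i)} (h : (Grid n).Adj u v) :
    gridWeight u ≠ gridWeight v := by
  obtain ⟨i, hi⟩ := gridWeight_sub_gridWeight_of_adj h
  omega

theorem eq_of_adj_of_adj_of_gridWeight_eq {u v w : ∀ i, Fin (n i)} (hu : (Grid n).Adj v u)
    (hw : (Grid n).Adj v w) (h : gridWeight u = gridWeight w) : u = w := by
  obtain ⟨i, hui, hu⟩ := grid_adj_iff.mp hu.symm
  obtain ⟨j, hwj, hw⟩ := grid_adj_iff.mp hw.symm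
  have hweight := gridWeight_sub_gridWeight hu
  rw [h, gridWeight_sub_gridWeight hw] at hweight
  have hij : i = j := by
    ext
    rcases hui with hui | hui <;> rcases hwj with hwj | hwj <;> rw [hui, hwj] at hweight <;> omega
  subst hij
  funext k
  by_cases hk : k = i
  · subst hk
    rcases hui with hui | hui <;> rcases hwj with hwj | hwj <;> rw [hui, hwj] at hweight <;> omega
  · rw [hu k hk, hw k hk]

theorem abs_gridWeight_sub_le {u v : ∀ i, Fin (n i)}
    (hu : u ∈ insert v ((Grid n).neighborSet v)) :
    |gridWeight u - gridWeight v| ≤ d := by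
  rcases hu with rfl | hu
  · simp
  · obtain ⟨i, hi⟩ := gridWeight_sub_gridWeight_of_adj hu.symm
    have := i.is_lt
    rcases hi with hi | hi <;> rw [hi, abs_le] <;> constructor <;> omega

def gridColoring (v : ∀ i, Fin (n i)) : ℕ :=
  (gridWeight v : ZMod (2 * d + 1)).val

theorem isDist2Coloring_gridColoring : (Grid n).IsDist2Coloring gridColoring := by
  intro v u hu w hw hcol
  have hdvd : (2 * d + 1 : ℤ) ∣ gridWeight u - gridWeight w := by
    simpa [gridColoring, ZMod.intCast_eq_intCast_iff_dvd_sub, dvd_sub_comm] using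
      ZMod.val_injective _ hcol
  have hweight : gridWeight u = gridWeight w := by
    have htri := abs_sub_le (gridWeight u) (gridWeight v) (gridWeight w)
    rw [abs_sub_comm (gridWeight v)] at htri
    have hlt : |gridWeight u - gridWeight w| < 2 * d + 1 := by
      linarith [abs_gridWeight_sub_le hu, abs_gridWeight_sub_le hw]
    linarith [Int.eq_zero_of_abs_lt_dvd hdvd hlt]
  rcases hu with rfl | hu <;> rcases hw with rfl | hw
  · rfl
  · exact absurd hweight (gridWeight_ne_of_adj hw)
  · exact absurd hweight.symm (gridWeight_ne_of_adj hu)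
  · exact eq_of_adj_of_adj_of_gridWeight_eq hu hw hweight

theorem ncard_range_gridColoring_le : (Set.range (gridColoring (n := n))).ncard ≤ 2 * d + 1 := by
  calc (Set.range (gridColoring (n := n))).ncard
      ≤ (Set.range (ZMod.val : ZMod (2 * d + 1) → ℕ)).ncard :=
        Set.ncard_le_ncard (Set.range_comp_subset_range _ _)
    _ = 2 * d + 1 := by rw [Set.ncard_range_of_injective (ZMod.val_injective _), Nat.card_zmod]

theorem two_mul_le_ncard_neighborSet (x : ∀ i, Fin (n i))
    (hx : ∀ i, 0 < (x i : ℕ) ∧ (x i : ℕ) + 1 < n i) :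
    2 * d ≤ ((Grid n).neighborSet x).ncard := by
  let f : Fin d × Bool → ∀ i, Fin (n i) := fun p =>
    Function.update x p.1 ⟨if p.2 then x p.1 + 1 else x p.1 - 1, by have := hx p.1; split <;> omega⟩
  have hf : Function.Injective f := by
    rintro ⟨i, b⟩ ⟨j, c⟩ h
    have hi := congrArg (fun y => (y i : ℕ)) h
    have := hx i
    by_cases hij : i = j
    · subst hij
      simp only [f, Function.update_self, Prod.mk.injEq, true_and] at hi ⊢
      cases b <;> cases c <;> simp only [Bool.false_eq_true, if_true, if_false] at hi ⊢ <;> omega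
    · simp only [f, Function.update_self, Function.update_of_ne hij] at hi
      split at hi <;> omega
  have hadj : Set.range f ⊆ (Grid n).neighborSet x := by
    rintro _ ⟨⟨i, b⟩, rfl⟩
    refine (grid_update_adj x i ?_).symm
    rw [SimpleGraph.pathGraph_adj]
    have := hx i
    dsimp only
    split <;> omega
  calc 2 * d = (Set.range f).ncard := by simp [Set.ncard_range_of_injective hf, mul_comm]
    _ ≤ _ := Set.ncard_le_ncard hadj

end Grid

theorem stmt19 {d : ℕ} (n : Fin d → ℕ) (hn : ∀ i, 3 ≤ n i) :
    dist2ChromaticNumber (Grid n) = 2 * d + 1 := by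
  let x : ∀ i, Fin (n i) := fun i => ⟨1, by have := hn i; omega⟩
  have hdeg := two_mul_le_ncard_neighborSet x fun i => ⟨Nat.one_pos, hn i⟩
  have hlower := (Grid n).ncard_neighborSet_lt_dist2ChromaticNumber x
  have hupper := (SimpleGraph.dist2ChromaticNumber_le isDist2Coloring_gridColoring).trans
    (ncard_range_gridColoring_le (n := n))
  omega
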